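/- arXiv:1511.01019 — 4 statements merged into one kernel-verified Lean document; each statement's English description precedes it below -/
import Mathlib

section
/- There exist permutations σ and τ of ℤ such that every nonempty reduced word in σ, τ, σ⁻¹, τ⁻¹ (i.e., every nontrivial element of the subgroup generated by σ and τ) has no fixed points. In particular, σ and τ generate a free subgroup of rank 2 in the permutation group of ℤ. -/
noncomputable def permConjHom {α β : Type*} (e : α ≃ β) :
    Equiv.Perm α →* Equiv.Perm β where
  toFun p := (e.symm.trans p).trans e
  map_one' := by ext x; simp
  map_mul' p q := by ext x; simp

instance : Countable (FreeGroup (Fin 2)) :=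
  FreeGroup.toWord_injective.countable

theorem exists_fixed_point_free_free_pair :
    ∃ σ τ : Equiv.Perm ℤ,
      (∀ g ∈ Subgroup.closure ({σ, τ} : Set (Equiv.Perm ℤ)), g ≠ 1 → ∀ n : ℤ, g n ≠ n) ∧
      ∃ φ : FreeGroup (Fin 2) →* Equiv.Perm ℤ,
        Function.Injective φ ∧ φ (FreeGroup.of 0) = σ ∧ φ (FreeGroup.of 1) = τ := by
  obtain ⟨e⟩ : Nonempty (FreeGroup (Fin 2) ≃ ℤ) := nonempty_equiv_of_countable
  let φ : FreeGroup (Fin 2) →* Equiv.Perm ℤ :=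
    (permConjHom e).comp (MulAction.toPermHom (FreeGroup (Fin 2)) (FreeGroup (Fin 2)))
  have hφ : ∀ (w : FreeGroup (Fin 2)) (n : ℤ), φ w n = e (w * e.symm n) := fun w n => rfl
  -- fixed point free for nontrivial w
  have key : ∀ w : FreeGroup (Fin 2), w ≠ 1 → ∀ n : ℤ, φ w n ≠ n := by
    intro w hw n h
    rw [hφ] at h
    apply hw
    have : w * e.symm n = e.symm n := by
      have := congrArg e.symm h
      simpa using this
    exact mul_right_cancel (by rw [this, one_mul])
  have hinj : Function.Injective φ := by
    rw [injective_iff_map_eq_one]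
    intro w hw
    by_contra h
    exact key w h (e 1) (by rw [hw]; rfl)
  refine ⟨φ (FreeGroup.of 0), φ (FreeGroup.of 1), ?_, φ, hinj, rfl, rfl⟩
  intro g hg hg1 n
  have hrange : g ∈ φ.range := by
    refine Subgroup.closure_le φ.range |>.mpr ?_ hg
    rintro x (rfl | rfl) <;> exact ⟨_, rfl⟩
  obtain ⟨w, rfl⟩ := hrange
  exact key w (fun h => hg1 (by rw [h, map_one])) n
end

section
/- The free group F₂ on generators a, b admits a paradoxical decomposition: F₂ is the disjoint union of four sets G₁, G₂, G₃, G₄, where G₁ is the set of reduced words beginning with a positive power of a, G₂ the set beginning with a negative power of a, G₃ the set of reduced words beginning with a positive power of b that contain at least one other letter, and G₄ the union of {words beginning with a negative power of b}, {identity}, and {bⁿ : n ≥ 1}; moreover F₂ = G₁ ⊔ a·G₂ and F₂ = G₃ ⊔ b·G₄. -/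
open FreeGroup

variable {α : Type*} [DecidableEq α]

/-- no-cancellation: multiplying by a single letter that doesn't cancel prepends it. -/
lemma mul_toWord_of_ne (x : α) (b : Bool) (w : FreeGroup α)
    (h : w.toWord.head? ≠ some (x, !b)) :
    (FreeGroup.mk [(x, b)] * w).toWord = (x, b) :: w.toWord := by
  conv_lhs => rw [← mk_toWord (x := w), mul_mk, toWord_mk]
  rw [List.singleton_append, reduce.cons, reduce_toWord]
  cases hw : w.toWord with
  | nil => rfl
  | cons hd tl =>
    simp only
    rw [if_neg]
    rintro ⟨h1, h2⟩
    apply h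
    rw [hw]
    have : hd = (x, !b) := by
      obtain ⟨y, c⟩ := hd
      simp at h1 h2
      simp [h1, h2]
    simp [this]

/-- cancellation case -/
lemma mul_toWord_of_eq (x : α) (b : Bool) (w : FreeGroup α) (tl : List (α × Bool))
    (h : w.toWord = (x, !b) :: tl) :
    (FreeGroup.mk [(x, b)] * w).toWord = tl := by
  conv_lhs => rw [← mk_toWord (x := w), mul_mk, toWord_mk]
  rw [List.singleton_append, reduce.cons, reduce_toWord, h]
  simp

/-- A reduced word has no adjacent inverse pair. -/
lemma toWord_no_cancel (x : α) (b : Bool) (w : FreeGroup α) (tl : List (α × Bool))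
    (h : w.toWord = (x, b) :: tl) : tl.head? ≠ some (x, !b) := by
  intro hh
  obtain ⟨tl2, rfl⟩ : ∃ t2, tl = (x, !b) :: t2 := by
    cases tl with
    | nil => simp at hh
    | cons hd t =>
      refine ⟨t, ?_⟩
      simp only [List.head?_cons, Option.some.injEq] at hh
      rw [hh]
  have hw : w = FreeGroup.mk tl2 := by
    have : w = FreeGroup.mk ((x, b) :: (x, !b) :: tl2) := by
      conv_lhs => rw [← mk_toWord (x := w)]
      rw [h]
    rw [this]
    have : ((x, b) :: (x, !b) :: tl2 : List (α × Bool)) = [(x,b)] ++ [(x,!b)] ++ tl2 := by simp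
    rw [this, ← mul_mk, ← mul_mk]
    have : (FreeGroup.mk [(x, b)] : FreeGroup α) * FreeGroup.mk [(x, !b)] = 1 := by
      have h0 : invRev ([(x, b)] : List (α × Bool)) = [(x, !b)] := by simp [invRev]
      rw [← h0, ← inv_mk, mul_inv_cancel]
    rw [this, one_mul]
  have h1 : w.toWord.length = tl2.length + 2 := by rw [h]; simp
  have h2 : w.toWord.length ≤ tl2.length := by
    rw [hw, toWord_mk]
    simpa [FreeGroup.norm, toWord_mk] using FreeGroup.norm_mk_le (L₁ := tl2)
  omega

lemma key (x : α) (b : Bool) (w : FreeGroup α) :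
    (FreeGroup.mk [(x, b)] * w).toWord.head? = some (x, b) ↔
      w.toWord.head? ≠ some (x, !b) := by
  constructor
  · intro h hc
    cases hw : w.toWord with
    | nil => rw [hw] at hc; simp at hc
    | cons hd tl =>
      rw [hw] at hc
      simp at hc
      subst hc
      rw [mul_toWord_of_eq x b w tl hw] at h
      exact toWord_no_cancel x (!b) w tl hw (by simpa using h)
  · intro h
    rw [mul_toWord_of_ne x b w h]
    rfl


/-- Words whose reduced form begins with a positive power of `a`. -/
def G₁ : Set (FreeGroup (Fin 2)) := {w | w.toWord.head? = some (0, true)}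

/-- Words whose reduced form begins with a negative power of `a`. -/
def G₂ : Set (FreeGroup (Fin 2)) := {w | w.toWord.head? = some (0, false)}

/-- Words beginning with a positive power of `b` and containing at least one other letter. -/
def G₃ : Set (FreeGroup (Fin 2)) :=
  {w | w.toWord.head? = some (1, true) ∧ ∀ n : ℕ, w ≠ (FreeGroup.of 1) ^ n}

/-- Words beginning with a negative power of `b`, together with the identity and the
positive pure powers of `b`. -/
def G₄ : Set (FreeGroup (Fin 2)) :=
  {w | w.toWord.head? = some (1, false) ∨ ∃ n : ℕ, w = (FreeGroup.of 1) ^ n}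


lemma of_eq_mk (x : α) : FreeGroup.of x = FreeGroup.mk [(x, true)] := by
  rw [← toWord_of (a := x), mk_toWord]

lemma inv_of_eq_mk (x : α) : (FreeGroup.of x)⁻¹ = FreeGroup.mk [(x, false)] := by
  have h0 : invRev ([(x, true)] : List (α × Bool)) = [(x, false)] := by simp [invRev]
  rw [of_eq_mk, inv_mk, h0]

lemma pow_head (n : ℕ) :
    (((FreeGroup.of 1 : FreeGroup (Fin 2))) ^ n).toWord.head? ≠ some (0, true) ∧
    (((FreeGroup.of 1 : FreeGroup (Fin 2))) ^ n).toWord.head? ≠ some (0, false) := by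
  rw [toWord_of_pow]
  cases n with
  | zero => simp
  | succ n => rw [List.replicate_succ]; simp

theorem free_group_paradoxical_decomposition :
    (G₁ ∪ G₂ ∪ G₃ ∪ G₄ = Set.univ) ∧
    ([G₁, G₂, G₃, G₄] : List (Set (FreeGroup (Fin 2)))).Pairwise Disjoint ∧
    (Disjoint G₁ ((fun w => FreeGroup.of 0 * w) '' G₂) ∧
      G₁ ∪ ((fun w => FreeGroup.of 0 * w) '' G₂) = Set.univ) ∧
    (Disjoint G₃ ((fun w => FreeGroup.of 1 * w) '' G₄) ∧
      G₃ ∪ ((fun w => FreeGroup.of 1 * w) '' G₄) = Set.univ) := by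
  have haG₂ : ((fun w => FreeGroup.of 0 * w) '' G₂) = G₁ᶜ := by
    ext w
    simp only [Set.mem_image, Set.mem_compl_iff, G₁, G₂, Set.mem_setOf_eq]
    constructor
    · rintro ⟨u, hu, rfl⟩
      rw [of_eq_mk]
      intro hc
      exact (key 0 true u).mp hc (by simpa using hu)
    · intro h
      refine ⟨(FreeGroup.of 0)⁻¹ * w, ?_, by group⟩
      rw [inv_of_eq_mk]
      exact (key 0 false w).mpr (by simpa using h)
  refine ⟨?_, ?_, ⟨?_, ?_⟩, ⟨?_, ?_⟩⟩
  · refine Set.eq_univ_of_forall fun w => ?_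
    simp only [Set.mem_union]
    cases hw : w.toWord.head? with
    | none =>
      exact Or.inr (Or.inr ⟨0, by rw [pow_zero, ← toWord_eq_nil_iff, ← List.head?_eq_none_iff, hw]⟩)
    | some p =>
      obtain ⟨x, bb⟩ := p
      fin_cases x <;> simp only [Fin.isValue, Fin.mk_one, Fin.zero_eta] at hw
      · cases bb
        · exact Or.inl (Or.inl (Or.inr hw))
        · exact Or.inl (Or.inl (Or.inl hw))
      · cases bb
        · exact Or.inr (Or.inl hw)
        · by_cases hp : ∃ n : ℕ, w = (FreeGroup.of 1) ^ n
          · exact Or.inr (Or.inr hp)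
          · push_neg at hp; exact Or.inl (Or.inr ⟨hw, hp⟩)
  · have d14 : Disjoint G₁ G₄ := by
      rw [Set.disjoint_left]
      rintro w h1 (h4 | ⟨n, rfl⟩)
      · rw [G₁, Set.mem_setOf_eq, h4] at h1; simp at h1
      · exact (pow_head n).1 h1
    have d24 : Disjoint G₂ G₄ := by
      rw [Set.disjoint_left]
      rintro w h1 (h4 | ⟨n, rfl⟩)
      · rw [G₂, Set.mem_setOf_eq, h4] at h1; simp at h1
      · exact (pow_head n).2 h1
    have d34 : Disjoint G₃ G₄ := by
      rw [Set.disjoint_left]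
      rintro w ⟨h1, h2⟩ (h4 | ⟨n, rfl⟩)
      · rw [h1] at h4; simp at h4
      · exact h2 n rfl
    have d12 : Disjoint G₁ G₂ := by
      rw [Set.disjoint_left]; intro w h1 h2
      simp only [G₁, G₂, Set.mem_setOf_eq] at h1 h2
      rw [h1] at h2; simp at h2
    have d13 : Disjoint G₁ G₃ := by
      rw [Set.disjoint_left]; intro w h1 ⟨h3, _⟩
      rw [G₁, Set.mem_setOf_eq, h3] at h1; simp at h1
    have d23 : Disjoint G₂ G₃ := by
      rw [Set.disjoint_left]; intro w h1 ⟨h3, _⟩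
      rw [G₂, Set.mem_setOf_eq, h3] at h1; simp at h1
    refine List.Pairwise.cons ?_ (List.Pairwise.cons ?_ (List.Pairwise.cons ?_
      (List.pairwise_singleton _ _))) <;>
      · intro s hs
        simp only [List.mem_cons, List.mem_singleton, List.not_mem_nil, or_false] at hs
        first
        | (rcases hs with rfl | rfl | rfl; exacts [d12, d13, d14])
        | (rcases hs with rfl | rfl; exacts [d23, d24])
        | (rcases hs with rfl; exact d34)
  · rw [haG₂]; exact disjoint_compl_right
  · rw [haG₂]; exact Set.union_compl_self G₁
  · rw [Set.disjoint_left]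
    rintro w ⟨hh, hnp⟩ ⟨u, hu, rfl⟩
    rcases hu with h4 | ⟨n, rfl⟩
    · rw [of_eq_mk] at hh
      exact (key 1 true u).mp hh (by simpa using h4)
    · exact hnp (n + 1) (pow_succ' _ _).symm
  · refine Set.eq_univ_of_forall fun w => ?_
    simp only [Set.mem_union]
    by_cases hh : w.toWord.head? = some (1, true)
    · by_cases hp : ∃ n : ℕ, w = (FreeGroup.of 1) ^ n
      · obtain ⟨n, rfl⟩ := hp
        cases n with
        | zero => rw [pow_zero] at hh; rw [toWord_one] at hh; simp at hh
        | succ n =>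
          right
          exact ⟨(FreeGroup.of 1) ^ n, Or.inr ⟨n, rfl⟩, (pow_succ' _ _).symm⟩
      · left; push_neg at hp; exact ⟨hh, hp⟩
    · right
      refine ⟨(FreeGroup.of 1)⁻¹ * w, Or.inl ?_, by group⟩
      rw [inv_of_eq_mk]
      exact (key 1 false w).mpr (by simpa using hh)
end

section
/- It is possible to partition the real line ℝ into four subsets A, B, C, D such that A ⊔ g(B) = ℝ and C ⊔ h(D) = ℝ (disjoint unions), where g and h are measure-preserving bijections of ℝ of the form x ↦ σ(⌊x⌋) + (x - ⌊x⌋) for permutations σ of ℤ. -/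
/-!
The residue classes `R₀, …, R₃` of `ℤ` modulo 4 partition `ℤ`, and since any two infinite,
coinfinite subsets of `ℤ` are exchanged by a permutation, some `σ` maps `R₁` onto `ℤ ∖ R₀` and some
`τ` maps `R₃` onto `ℤ ∖ R₂`. Pulling everything back along `⌊·⌋` gives the decomposition of `ℝ`,
since `pwr σ` maps `⌊·⌋⁻¹' S` onto `⌊·⌋⁻¹' (σ '' S)`. It preserves Lebesgue measure because it
translates each `[n, n + 1)` onto `[σ n, σ n + 1)`.
-/

/-- The piecewise rigid extension of a permutation of ℤ to ℝ. -/
noncomputable def pwr (σ : Equiv.Perm ℤ) : ℝ → ℝ :=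
  fun x => (σ ⌊x⌋ : ℝ) + (x - ⌊x⌋)

open MeasureTheory Set

theorem Equiv.Perm.exists_image_eq_of_infinite {α : Type*} [Countable α] {P Q : Set α}
    (hP : P.Infinite) (hQ : Q.Infinite) (hPc : Pᶜ.Infinite) (hQc : Qᶜ.Infinite) :
    ∃ σ : Equiv.Perm α, σ '' P = Q := by
  classical
  have := hP.to_subtype; have := hQ.to_subtype
  have : Infinite {x // x ∉ P} := hPc.to_subtype
  have : Infinite {x // x ∉ Q} := hQc.to_subtype
  obtain ⟨e⟩ : Nonempty (P ≃ Q) := nonempty_equiv_of_countable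
  obtain ⟨f⟩ : Nonempty ({x // x ∉ P} ≃ {x // x ∉ Q}) := nonempty_equiv_of_countable
  refine ⟨e.subtypeCongr f, ((Equiv.preimage_eq_iff_eq_image _ _ _).mp ?_).symm⟩
  ext x
  by_cases hx : x ∈ P
  · simp [Equiv.subtypeCongr, hx, (e ⟨x, hx⟩).2]
  · simp [Equiv.subtypeCongr, hx, (f ⟨x, hx⟩).2]

theorem Int.infinite_setOf_emod_eq {m : ℤ} (hm : m ≠ 0) (k : ℤ) :
    {n : ℤ | n % m = k % m}.Infinite :=
  infinite_of_injective_forall_mem (f := fun j => m * j + k)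
    (fun _ _ h => mul_left_cancel₀ hm (add_right_cancel h)) (by simp)

theorem Int.exists_paradoxical_decomposition :
    ∃ (S T U V : Set ℤ) (σ τ : Equiv.Perm ℤ), S ∪ T ∪ U ∪ V = univ ∧
      ([S, T, U, V] : List (Set ℤ)).Pairwise Disjoint ∧ σ '' T = Sᶜ ∧ τ '' V = Uᶜ := by
  let R (k : ℤ) : Set ℤ := {n | n % 4 = k % 4}
  have hR (k) : (R k).Infinite := infinite_setOf_emod_eq (by norm_num) k
  have hRc (j k : ℤ) (h : j % 4 ≠ k % 4) : (R k)ᶜ.Infinite :=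
    (hR j).mono fun n hn hn' => h (hn.symm.trans hn')
  obtain ⟨σ, hσ⟩ := Equiv.Perm.exists_image_eq_of_infinite (hR 1) (hRc 1 0 (by decide))
    (hRc 0 1 (by decide)) (by rw [compl_compl]; exact hR 0)
  obtain ⟨τ, hτ⟩ := Equiv.Perm.exists_image_eq_of_infinite (hR 3) (hRc 0 2 (by decide))
    (hRc 0 3 (by decide)) (by rw [compl_compl]; exact hR 2)
  refine ⟨R 0, R 1, R 2, R 3, σ, τ, ?_, ?_, hσ, hτ⟩
  · ext n
    simp only [R, mem_union, mem_ofPred_eq, mem_univ, iff_true]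
    omega
  · simp only [R, List.pairwise_cons, List.mem_cons, List.not_mem_nil, or_false, disjoint_left,
      mem_ofPred_eq, forall_eq_or_imp, forall_eq, IsEmpty.forall_iff, implies_true,
      List.Pairwise.nil, and_true]
    refine ⟨⟨?_, ?_, ?_⟩, ⟨?_, ?_⟩, ?_⟩ <;> intro n <;> omega

theorem pwr_eq_add_of_floor_eq (σ : Equiv.Perm ℤ) {x : ℝ} {n : ℤ} (h : ⌊x⌋ = n) :
    pwr σ x = x + (σ n - n) := by
  rw [pwr, h]; ring

theorem floor_pwr (σ : Equiv.Perm ℤ) (x : ℝ) : ⌊pwr σ x⌋ = σ ⌊x⌋ := by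
  rw [Int.floor_eq_iff, pwr]
  constructor <;> linarith [Int.floor_le x, Int.lt_floor_add_one x]

theorem pwr_inv_pwr (σ : Equiv.Perm ℤ) (x : ℝ) : pwr σ⁻¹ (pwr σ x) = x := by
  rw [pwr_eq_add_of_floor_eq _ (floor_pwr σ x), pwr_eq_add_of_floor_eq σ rfl,
    Equiv.Perm.coe_inv, Equiv.symm_apply_apply]
  ring

noncomputable def pwrEquiv (σ : Equiv.Perm ℤ) : ℝ ≃ ℝ where
  toFun := pwr σ
  invFun := pwr σ⁻¹
  left_inv := pwr_inv_pwr σ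
  right_inv x := by simpa using pwr_inv_pwr σ⁻¹ x

@[simp] theorem coe_pwrEquiv (σ : Equiv.Perm ℤ) : ⇑(pwrEquiv σ) = pwr σ := rfl

theorem bijective_pwr (σ : Equiv.Perm ℤ) : Function.Bijective (pwr σ) :=
  (pwrEquiv σ).bijective

theorem image_pwr_preimage_floor (σ : Equiv.Perm ℤ) (S : Set ℤ) :
    pwr σ '' (Int.floor ⁻¹' S) = Int.floor ⁻¹' (σ '' S) := by
  rw [← coe_pwrEquiv, Equiv.image_eq_preimage_symm, Equiv.image_eq_preimage_symm]
  ext y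
  show ⌊pwr σ⁻¹ y⌋ ∈ S ↔ σ⁻¹ ⌊y⌋ ∈ S
  rw [floor_pwr]

theorem measure_eq_tsum_inter_Ico_intCast (μ : Measure ℝ) {t : Set ℝ} (ht : MeasurableSet t) :
    μ t = ∑' n : ℤ, μ (t ∩ Ico (n : ℝ) (n + 1)) := by
  conv_lhs => rw [← inter_univ t, ← iUnion_Ico_intCast ℝ, inter_iUnion]
  exact measure_iUnion ((pairwise_disjoint_Ico_intCast ℝ).mono fun _ _ h =>
    h.mono inter_subset_right inter_subset_right) fun _ => ht.inter measurableSet_Ico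

theorem preimage_pwr_inter_Ico (σ : Equiv.Perm ℤ) (s : Set ℝ) (n : ℤ) :
    pwr σ ⁻¹' s ∩ Ico (n : ℝ) (n + 1)
      = (· + ((σ n : ℝ) - n)) ⁻¹' (s ∩ Ico (σ n : ℝ) (σ n + 1)) := by
  ext x
  have hshift : x ∈ Ico (n : ℝ) (n + 1) ↔ x + ((σ n : ℝ) - n) ∈ Ico (σ n : ℝ) (σ n + 1) := by
    simp only [mem_Ico]; constructor <;> rintro ⟨h₁, h₂⟩ <;> constructor <;> linarith
  rw [mem_inter_iff, mem_preimage, mem_preimage, mem_inter_iff, ← hshift]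
  exact and_congr_left fun hx => by rw [pwr_eq_add_of_floor_eq σ (Int.floor_eq_iff.mpr hx)]

theorem measurePreserving_pwr (μ : Measure ℝ) [μ.IsAddRightInvariant] (σ : Equiv.Perm ℤ) :
    MeasurePreserving (pwr σ) μ μ := by
  have hmeas : Measurable (pwr σ) := by unfold pwr; fun_prop
  refine ⟨hmeas, Measure.ext fun s hs => ?_⟩
  rw [Measure.map_apply hmeas hs, measure_eq_tsum_inter_Ico_intCast μ (hmeas hs),
    measure_eq_tsum_inter_Ico_intCast μ hs,
    ← σ.tsum_eq fun m : ℤ => μ (s ∩ Ico (m : ℝ) (m + 1))]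
  exact tsum_congr fun n => by rw [preimage_pwr_inter_Ico, measure_preimage_add_right]

theorem real_line_paradoxical_decomposition :
    ∃ (A B C D : Set ℝ) (σ τ : Equiv.Perm ℤ),
      (A ∪ B ∪ C ∪ D = Set.univ) ∧
      ([A, B, C, D] : List (Set ℝ)).Pairwise Disjoint ∧
      MeasureTheory.MeasurePreserving (pwr σ) MeasureTheory.volume MeasureTheory.volume ∧
      MeasureTheory.MeasurePreserving (pwr τ) MeasureTheory.volume MeasureTheory.volume ∧
      Function.Bijective (pwr σ) ∧ Function.Bijective (pwr τ) ∧
      Disjoint A (pwr σ '' B) ∧ A ∪ pwr σ '' B = Set.univ ∧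
      Disjoint C (pwr τ '' D) ∧ C ∪ pwr τ '' D = Set.univ := by
  obtain ⟨S, T, U, V, σ, τ, hcover, hdisj, hσ, hτ⟩ := Int.exists_paradoxical_decomposition
  refine ⟨Int.floor ⁻¹' S, Int.floor ⁻¹' T, Int.floor ⁻¹' U, Int.floor ⁻¹' V, σ, τ, ?_,
    hdisj.map _ fun _ _ h => h.preimage _, measurePreserving_pwr volume σ,
    measurePreserving_pwr volume τ, bijective_pwr σ, bijective_pwr τ, ?_, ?_, ?_, ?_⟩ <;>
    simp only [image_pwr_preimage_floor, hσ, hτ, ← preimage_union, hcover, union_compl_self,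
      preimage_univ]
  all_goals exact disjoint_compl_right.preimage _
end

section
/- The free group F_∞ on countably infinitely many generators a₁, a₂, … can be partitioned into countably many subsets A₁, B₁, A₂, B₂, … such that A_j ⊔ a_j·B_j = F_∞ for every j ≥ 1. -/
open FreeGroup


lemma not_red_pair (w : FreeGroup ℕ) {j : ℕ} {b : Bool} {tl : List (ℕ × Bool)}
    (h : w.toWord = (j, b) :: (j, !b) :: tl) : False := by
  exact FreeGroup.reduce.not (L₁ := w.toWord) (L₂ := []) (L₃ := tl) (x := j) (b := b)
    (by rw [reduce_toWord, h]; rfl)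

lemma key_s17 (j : ℕ) (w : FreeGroup ℕ) :
    (FreeGroup.of j * w).toWord =
      if w.toWord.head? = some (j, false) then w.toWord.tail
      else (j, true) :: w.toWord := by
  have h1 : FreeGroup.of j * w = mk ((j, true) :: w.toWord) := by
    conv_lhs => rw [← mk_toWord (x := w), FreeGroup.of, mul_mk]
    rfl
  rw [h1, toWord_mk, reduce.cons]
  rw [reduce_toWord]
  cases hw : w.toWord with
  | nil => simp
  | cons hd tl =>
    rcases hd with ⟨i, b⟩
    cases b <;> simp_all [eq_comm]

lemma head_of_mul (j : ℕ) (w : FreeGroup ℕ) :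
    (FreeGroup.of j * w).toWord.head? = some (j, true) ↔
      w.toWord.head? ≠ some (j, false) := by
  rw [key_s17]
  split
  · rename_i h
    constructor
    · intro htl
      exfalso
      cases hw : w.toWord with
      | nil => simp [hw] at h
      | cons hd tl =>
        rw [hw] at h htl
        simp at h htl
        cases tl with
        | nil => simp at htl
        | cons hd2 tl2 =>
          simp at htl
          exact not_red_pair w (j := j) (b := false) (tl := tl2) (by rw [hw, h, htl]; rfl)
    · intro h2; exact absurd h h2
  · simp_all

lemma head_pow (j n : ℕ) :
    (FreeGroup.of j ^ n).toWord.head? = if n = 0 then none else some (j, true) := by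
  rw [toWord_of_pow]
  cases n <;> simp [List.replicate_succ]

lemma pow_shift {j : ℕ} {w : FreeGroup ℕ} (h : FreeGroup.of j * w ≠ 1) :
    (∃ n, FreeGroup.of j * w = FreeGroup.of j ^ n) ↔ ∃ n, w = FreeGroup.of j ^ n := by
  constructor
  · rintro ⟨n, hn⟩
    cases n with
    | zero => simp at hn; exact absurd hn h
    | succ m =>
      refine ⟨m, ?_⟩
      rw [pow_succ'] at hn
      exact mul_left_cancel hn

  · rintro ⟨n, rfl⟩
    exact ⟨n + 1, by rw [pow_succ']⟩

theorem free_group_countable_paradoxical :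
    ∃ A B : ℕ → Set (FreeGroup ℕ),
      (⋃ j, A j ∪ B j) = Set.univ ∧
      (∀ i j, i ≠ j → Disjoint (A i) (A j)) ∧
      (∀ i j, i ≠ j → Disjoint (B i) (B j)) ∧
      (∀ i j, Disjoint (A i) (B j)) ∧
      ∀ j, Disjoint (A j) ((fun w => FreeGroup.of j * w) '' B j) ∧
        A j ∪ (fun w => FreeGroup.of j * w) '' B j = Set.univ := by
  set A : ℕ → Set (FreeGroup ℕ) := fun j =>
    {w | w.toWord.head? = some (j, true) ∧ ¬(j = 0 ∧ ∃ n, w = FreeGroup.of 0 ^ n)} with hA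
  set B : ℕ → Set (FreeGroup ℕ) := fun j =>
    (fun w => (FreeGroup.of j)⁻¹ * w) '' (A j)ᶜ with hB
  have himage : ∀ j, (fun w => FreeGroup.of j * w) '' B j = (A j)ᶜ := by
    intro j
    rw [hB]
    rw [Set.image_image]
    simp
  have memB : ∀ j w, w ∈ B j ↔
      (w.toWord.head? = some (j, false) ∨ (j = 0 ∧ ∃ n, w = FreeGroup.of 0 ^ n)) := by
    intro j w
    have h1 : w ∈ B j ↔ FreeGroup.of j * w ∉ A j := by
      rw [hB]
      constructor
      · rintro ⟨u, hu, rfl⟩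
        simpa using hu
      · intro h
        exact ⟨FreeGroup.of j * w, h, by simp⟩
    rw [h1, hA]
    simp only [Set.mem_setOf_eq, head_of_mul]
    constructor
    · intro h
      by_cases hh : w.toWord.head? = some (j, false)
      · exact Or.inl hh
      · right
        push_neg at h
        obtain ⟨hj, n, hn⟩ := h hh
        subst hj
        have hne : FreeGroup.of 0 * w ≠ 1 := by
          intro h1'
          have hw' : w = (FreeGroup.of 0)⁻¹ := eq_inv_of_mul_eq_one_right h1'
          apply hh
          rw [hw', toWord_inv, toWord_of]
          rfl
        exact ⟨rfl, (pow_shift hne).mp ⟨n, hn⟩⟩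
    · rintro (hh | ⟨hj, n, rfl⟩)
      · intro hcon; exact hcon.1 hh
      · subst hj
        rintro ⟨-, hcon⟩
        apply hcon
        exact ⟨rfl, n + 1, by rw [pow_succ']⟩
  refine ⟨A, B, ?_, ?_, ?_, ?_, ?_⟩
  · -- cover
    ext w
    simp only [Set.mem_iUnion, Set.mem_union, Set.mem_univ, iff_true]
    cases hw : w.toWord.head? with
    | none =>
      refine ⟨0, Or.inr ?_⟩
      rw [memB]
      right
      refine ⟨rfl, 0, ?_⟩
      rw [pow_zero, ← toWord_eq_nil_iff, List.head?_eq_none_iff.mp hw]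
    | some hd =>
      rcases hd with ⟨i, b⟩
      cases b with
      | false => exact ⟨i, Or.inr ((memB i w).mpr (Or.inl hw))⟩
      | true =>
        by_cases hp : i = 0 ∧ ∃ n, w = FreeGroup.of 0 ^ n
        · exact ⟨0, Or.inr ((memB 0 w).mpr (Or.inr ⟨rfl, hp.2⟩))⟩
        · exact ⟨i, Or.inl ⟨hw, hp⟩⟩
  · -- A disjoint
    intro i j hij
    rw [Set.disjoint_left]
    rintro w ⟨hw1, -⟩ ⟨hw2, -⟩
    rw [hw1] at hw2
    simp at hw2
    exact hij hw2
  · -- B disjoint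
    intro i j hij
    rw [Set.disjoint_left]
    intro w hwi hwj
    rw [memB] at hwi hwj
    rcases hwi with h1 | ⟨hi0, n, rfl⟩ <;> rcases hwj with h2 | h3
    · rw [h1] at h2; simp at h2; exact hij h2
    · obtain ⟨hj0, n, rfl⟩ := h3
      rw [head_pow] at h1
      split at h1 <;> simp_all
    · rw [head_pow] at h2
      split at h2 <;> simp_all
    · exact hij (hi0.trans h3.1.symm)
  · -- A vs B disjoint
    intro i j
    rw [Set.disjoint_left]
    rintro w ⟨hw1, hw2⟩ hwB
    rw [memB] at hwB
    rcases hwB with h1 | ⟨hj0, n, rfl⟩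
    · rw [hw1] at h1; simp at h1
    · rw [head_pow] at hw1
      by_cases hn : n = 0
      · rw [if_pos hn] at hw1; simp at hw1
      · rw [if_neg hn] at hw1
        simp only [Option.some.injEq, Prod.mk.injEq] at hw1
        exact hw2 ⟨hw1.1.symm, n, rfl⟩
  · -- paradoxical pieces
    intro j
    rw [himage]
    exact ⟨disjoint_compl_right, Set.union_compl_self _⟩
end
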